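/- arXiv:0705.1443 — 4 statements merged into one kernel-verified Lean document; each statement's English description precedes it below -/
import Mathlib

section
/- Let ℓ be an odd prime and let c₁, c₂, D, p be integers with ℓ ∤ 2·c₂·D. Suppose 1 - 3c₁ - (c₁-1)p + 2(c₁² - c₂²D) ≡ 0 (mod ℓ) and (p+1)² - 4c₁(p+1) + 4(c₁² - c₂²D) ≡ 0 (mod ℓ). Then p ≡ 1 (mod ℓ) or p ≡ 2c₁ - 1 (mod ℓ). -/
theorem p_cong_one_or_2c1_sub_one (ℓ c₁ c₂ D p : ℤ) (hℓ : Prime ℓ) (hodd : Odd ℓ)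
    (hdvd : ¬ ℓ ∣ 2*c₂*D)
    (h1 : 1 - 3*c₁ - (c₁-1)*p + 2*(c₁^2 - c₂^2*D) ≡ 0 [ZMOD ℓ])
    (h2 : (p+1)^2 - 4*c₁*(p+1) + 4*(c₁^2 - c₂^2*D) ≡ 0 [ZMOD ℓ]) :
    p ≡ 1 [ZMOD ℓ] ∨ p ≡ 2*c₁ - 1 [ZMOD ℓ] := by
  have d1 : ℓ ∣ 1 - 3*c₁ - (c₁-1)*p + 2*(c₁^2 - c₂^2*D) :=
    (Int.modEq_zero_iff_dvd).mp h1
  have d2 : ℓ ∣ (p+1)^2 - 4*c₁*(p+1) + 4*(c₁^2 - c₂^2*D) :=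
    (Int.modEq_zero_iff_dvd).mp h2
  obtain ⟨a, ha⟩ := d1
  obtain ⟨b, hb⟩ := d2
  have key : ℓ ∣ (p - 1) * (p - (2*c₁ - 1)) :=
    ⟨b - 2*a, by linear_combination hb - 2*ha⟩
  rcases hℓ.dvd_mul.mp key with h | h
  · exact Or.inl ((Int.modEq_iff_dvd).mpr (by simpa using (dvd_neg.mpr h)))
  · exact Or.inr ((Int.modEq_iff_dvd).mpr (by simpa using (dvd_neg.mpr h)))
end

section
/- Let ℓ be an odd prime and c₁, c₂, D, p integers with ℓ ∤ c₂D and ℓ ∤ p. Let P(X) = X⁴ - 4c₁X³ + (2p + 4(c₁² - c₂²D))X² - 4c₁pX + p². If ℓ divides P(1) and (X-1)² divides P(X) in (ℤ/ℓℤ)[X], then p ≡ 1 (mod ℓ). -/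
open Polynomial

theorem main_case23 (ℓ : ℕ) (c₁ c₂ D p : ℤ) (hℓ : ℓ.Prime) (hodd : Odd ℓ)
    (hc₂D : ¬ (ℓ : ℤ) ∣ c₂ * D) (hp : ¬ (ℓ : ℤ) ∣ p)
    (hP1 : (ℓ : ℤ) ∣ (X^4 - C (4*c₁) * X^3 + C (2*p + 4*(c₁^2 - c₂^2*D)) * X^2
        - C (4*c₁*p) * X + C (p^2)).eval 1)
    (hdvd : ((X : (ZMod ℓ)[X]) - 1)^2 ∣
      (X^4 - C (4*c₁) * X^3 + C (2*p + 4*(c₁^2 - c₂^2*D)) * X^2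
        - C (4*c₁*p) * X + C (p^2)).map (Int.castRingHom (ZMod ℓ))) :
    p ≡ 1 [ZMOD (ℓ : ℤ)] := by
  haveI : Fact ℓ.Prime := ⟨hℓ⟩
  have hℓ2 : ℓ ≠ 2 := by rintro rfl; exact (by decide : ¬ Odd 2) hodd
  have h2 : (2 : ZMod ℓ) ≠ 0 := by
    intro h
    have h' : ((2 : ℕ) : ZMod ℓ) = 0 := by exact_mod_cast h
    exact hℓ2 ((Nat.prime_dvd_prime_iff_eq hℓ Nat.prime_two).mp
      ((ZMod.natCast_eq_zero_iff 2 ℓ).mp h'))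
  -- relation A
  simp only [eval_add, eval_sub, eval_mul, eval_pow, eval_C, eval_X, one_pow, mul_one] at hP1
  have hA : ((p : ZMod ℓ) + 1 - 2*c₁)^2 - 4*c₂^2*D = 0 := by
    have := (ZMod.intCast_zmod_eq_zero_iff_dvd _ ℓ).mpr hP1
    push_cast at this
    linear_combination this
  -- relation B from derivative
  obtain ⟨q, hq⟩ := hdvd
  have hB0 := congrArg (fun r => (derivative r).eval 1) hq
  simp only [Polynomial.derivative_map, derivative_mul, derivative_pow, derivative_sub,
    derivative_add, derivative_X, derivative_one, derivative_C, derivative_X_pow,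
    eval_add, eval_sub, eval_mul, eval_pow, eval_C, eval_X, eval_one, eval_map,
    eval₂_add, eval₂_sub, eval₂_mul, eval₂_pow, eval₂_X, eval₂_C, eval₂_one,
    Int.coe_castRingHom, mul_zero, zero_mul, add_zero, zero_add, mul_one, sub_zero,
    Polynomial.eval_natCast, map_sub, map_add, map_mul, map_pow, Polynomial.map_X,
    Polynomial.map_C] at hB0
  have hB : (4 : ZMod ℓ) - 12*c₁ + 2*(2*p + 4*(c₁^2 - c₂^2*D)) - 4*c₁*p = 0 := by
    have := hB0
    push_cast at this ⊢
    linear_combination this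
  -- combine
  have key : (2 : ZMod ℓ) * (((p : ZMod ℓ) - 1) * ((p : ZMod ℓ) + 1 - 2*c₁)) = 0 := by
    linear_combination 2*hA - hB
  have hpa : ((p : ZMod ℓ) - 1) * ((p : ZMod ℓ) + 1 - 2*c₁) = 0 :=
    (mul_eq_zero.mp key).resolve_left h2
  have hcD : (c₂ : ZMod ℓ) * D ≠ 0 := fun h =>
    hc₂D ((ZMod.intCast_zmod_eq_zero_iff_dvd _ ℓ).mp (by push_cast; exact h))
  have hp1 : (p : ZMod ℓ) - 1 = 0 := by
    rcases mul_eq_zero.mp hpa with h | h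
    · exact h
    · exfalso
      have : (4 : ZMod ℓ) * c₂^2 * D = 0 := by
        have := hA
        rw [h] at this
        linear_combination -this
      have h4 : (4 : ZMod ℓ) ≠ 0 := by
        have : (4 : ZMod ℓ) = 2 * 2 := by norm_num
        rw [this]; exact mul_ne_zero h2 h2
      rcases mul_eq_zero.mp this with h' | h'
      · rcases mul_eq_zero.mp h' with h'' | h''
        · exact h4 h''
        · exact hcD (by rcases pow_eq_zero_iff (n := 2) (by norm_num) |>.mp h'' with h3; rw [h3, zero_mul])
      · exact hcD (by rw [h', mul_zero])
  have hpe : ((p : ℤ) : ZMod ℓ) = ((1 : ℤ) : ZMod ℓ) := by push_cast; linear_combination hp1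
  exact (ZMod.intCast_eq_intCast_iff p 1 ℓ).mp hpe
end

section
/- Let ℓ be an odd prime and c, c₂, D, p integers with ℓ ∤ c₂D and ℓ ∤ p. Let P(X) = X⁴ - 2cX³ + (2p + c² - c₂²D)X² - 2pcX + p². If ℓ divides P(1) and (X-1)² divides P(X) in (ℤ/ℓℤ)[X], then p ≡ 1 (mod ℓ). -/
open Polynomial

theorem main_case1 (ℓ : ℕ) (c c₂ D p : ℤ) (hℓ : ℓ.Prime) (hodd : Odd ℓ)
    (hc₂D : ¬ (ℓ : ℤ) ∣ c₂ * D) (hp : ¬ (ℓ : ℤ) ∣ p)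
    (hP1 : (ℓ : ℤ) ∣ (X^4 - C (2*c) * X^3 + C (2*p + c^2 - c₂^2*D) * X^2
        - C (2*p*c) * X + C (p^2)).eval 1)
    (hdvd : ((X : (ZMod ℓ)[X]) - 1)^2 ∣
      (X^4 - C (2*c) * X^3 + C (2*p + c^2 - c₂^2*D) * X^2
        - C (2*p*c) * X + C (p^2)).map (Int.castRingHom (ZMod ℓ))) :
    p ≡ 1 [ZMOD (ℓ : ℤ)] := by
  set P : ℤ[X] := X^4 - C (2*c) * X^3 + C (2*p + c^2 - c₂^2*D) * X^2
        - C (2*p*c) * X + C (p^2) with hPdef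
  -- divisibility from P(1)
  have hA : (ℓ : ℤ) ∣ (p + 1 - c)^2 - c₂^2 * D := by
    have : P.eval 1 = (p + 1 - c)^2 - c₂^2 * D := by
      simp [hPdef]; ring
    rwa [this] at hP1
  -- derivative condition
  obtain ⟨R, hR⟩ := hdvd
  have hder : ((P.derivative.eval 1 : ℤ) : ZMod ℓ) = 0 := by
    have h1 : (P.map (Int.castRingHom (ZMod ℓ))).derivative.eval 1 = 0 := by
      rw [hR]
      simp [derivative_mul, derivative_pow]
    rw [derivative_map] at h1
    rwa [eval_map, eval₂_at_one] at h1
  have hB : (ℓ : ℤ) ∣ P.derivative.eval 1 :=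
    (ZMod.intCast_zmod_eq_zero_iff_dvd _ _).mp hder
  have hval : P.derivative.eval 1
      = 2 * ((1 - p) * (1 + p - c)) + 2 * ((p + 1 - c)^2 - c₂^2 * D) := by
    simp [hPdef, derivative_pow, derivative_intCast]; ring
  have hB2 : (ℓ : ℤ) ∣ 2 * ((1 - p) * (1 + p - c)) := by
    have := dvd_sub (hval ▸ hB) (Dvd.dvd.mul_left hA 2)
    simpa using this
  have hℓ2 : ¬ (ℓ : ℤ) ∣ 2 := by
    intro h
    have h2 : ℓ ∣ 2 := by exact_mod_cast h
    have : ℓ = 2 := (Nat.prime_dvd_prime_iff_eq hℓ Nat.prime_two).mp h2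
    rw [this] at hodd
    simp [Nat.odd_iff] at hodd
  have hprime : Prime (ℓ : ℤ) := Nat.prime_iff_prime_int.mp hℓ
  have hcases := (hprime.dvd_mul.mp hB2).resolve_left hℓ2
  rcases hprime.dvd_mul.mp hcases with h1 | h2
  · exact Int.modEq_iff_dvd.mpr h1
  · -- then ℓ ∣ c₂² D, contradiction
    exfalso
    have hd : (ℓ : ℤ) ∣ (p + 1 - c)^2 := by
      have he : p + 1 - c = 1 + p - c := by ring
      rw [he]
      exact dvd_pow h2 two_ne_zero
    have : (ℓ : ℤ) ∣ c₂^2 * D := by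
      have := dvd_sub hd hA
      simpa using this
    have : (ℓ : ℤ) ∣ c₂ * (c₂ * D) := by
      have h : c₂^2 * D = c₂ * (c₂ * D) := by ring
      rwa [h] at this
    rcases hprime.dvd_mul.mp this with h | h
    · exact hc₂D (h.mul_right D)
    · exact hc₂D h
end

section
/- Let D ≡ 1 (mod 4) be a squarefree integer, ξ = (1+√D)/2, and ω = c₁ + c₂ξ + (c₃ + c₄ξ)η with η² = -(a + bξ), a, b, cᵢ ∈ ℤ. If ω satisfies ωω̄ = p ∈ ℤ under all four embeddings, then the characteristic polynomial (over ℚ) of ω is X⁴ - 2cX³ + (2p + c² - c₂²D)X² - 2pcX + p² where c = 2c₁ + c₂. -/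
open Polynomial

theorem conjugate_product_case1 (D a b c₁ c₂ c₃ c₄ p : ℤ)
    (hD2 : 2 ≤ D) (hsf : Squarefree D) (hmod : D % 4 = 1)
    (hpos1 : 0 < (a : ℝ) + b * ((1 + Real.sqrt D) / 2))
    (hpos2 : 0 < (a : ℝ) + b * ((1 - Real.sqrt D) / 2))
    (h1 : ((c₁ : ℝ) + c₂ * ((1 + Real.sqrt D) / 2))^2
        + ((c₃ : ℝ) + c₄ * ((1 + Real.sqrt D) / 2))^2 * ((a : ℝ) + b * ((1 + Real.sqrt D) / 2)) = p)
    (h2 : ((c₁ : ℝ) + c₂ * ((1 - Real.sqrt D) / 2))^2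
        + ((c₃ : ℝ) + c₄ * ((1 - Real.sqrt D) / 2))^2 * ((a : ℝ) + b * ((1 - Real.sqrt D) / 2)) = p)
    (ω₁ ω₃ : ℂ)
    (hω₁ : ω₁ = (((c₁ : ℝ) + c₂ * ((1 + Real.sqrt D) / 2) : ℝ) : ℂ)
      + Complex.I * ((((c₃ : ℝ) + c₄ * ((1 + Real.sqrt D) / 2))
          * Real.sqrt ((a : ℝ) + b * ((1 + Real.sqrt D) / 2)) : ℝ) : ℂ))
    (hω₃ : ω₃ = (((c₁ : ℝ) + c₂ * ((1 - Real.sqrt D) / 2) : ℝ) : ℂ)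
      + Complex.I * ((((c₃ : ℝ) + c₄ * ((1 - Real.sqrt D) / 2))
          * Real.sqrt ((a : ℝ) + b * ((1 - Real.sqrt D) / 2)) : ℝ) : ℂ)) :
    (X - C ω₁) * (X - C (starRingEnd ℂ ω₁)) * (X - C ω₃) * (X - C (starRingEnd ℂ ω₃)) =
      X^4 - C ((2*(2*c₁ + c₂) : ℤ) : ℂ) * X^3
        + C ((2*p + (2*c₁ + c₂)^2 - c₂^2*D : ℤ) : ℂ) * X^2
        - C ((2*p*(2*c₁ + c₂) : ℤ) : ℂ) * X + C ((p^2 : ℤ) : ℂ) := by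
  set r : ℝ := Real.sqrt D with hrdef
  have hD0 : (0:ℝ) ≤ (D:ℝ) := by positivity
  have hr2 : r ^ 2 = (D : ℝ) := Real.sq_sqrt hD0
  -- real and imaginary parts
  set x₁ : ℝ := (c₁ : ℝ) + c₂ * ((1 + r) / 2) with hx1
  set y₁ : ℝ := ((c₃ : ℝ) + c₄ * ((1 + r) / 2)) * Real.sqrt ((a : ℝ) + b * ((1 + r) / 2)) with hy1
  set x₃ : ℝ := (c₁ : ℝ) + c₂ * ((1 - r) / 2) with hx3
  set y₃ : ℝ := ((c₃ : ℝ) + c₄ * ((1 - r) / 2)) * Real.sqrt ((a : ℝ) + b * ((1 - r) / 2)) with hy3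
  have hy1sq : y₁ ^ 2 = ((c₃ : ℝ) + c₄ * ((1 + r) / 2)) ^ 2 * ((a : ℝ) + b * ((1 + r) / 2)) := by
    rw [hy1, mul_pow, Real.sq_sqrt hpos1.le]
  have hy3sq : y₃ ^ 2 = ((c₃ : ℝ) + c₄ * ((1 - r) / 2)) ^ 2 * ((a : ℝ) + b * ((1 - r) / 2)) := by
    rw [hy3, mul_pow, Real.sq_sqrt hpos2.le]
  have hq1 : x₁ ^ 2 + y₁ ^ 2 = (p : ℝ) := by rw [hy1sq]; exact h1
  have hq3 : x₃ ^ 2 + y₃ ^ 2 = (p : ℝ) := by rw [hy3sq]; exact h2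
  have hc1 : starRingEnd ℂ ω₁ = (x₁ : ℂ) - Complex.I * (y₁ : ℂ) := by
    rw [hω₁]; simp [Complex.ext_iff]
  have hc3 : starRingEnd ℂ ω₃ = (x₃ : ℂ) - Complex.I * (y₃ : ℂ) := by
    rw [hω₃]; simp [Complex.ext_iff]
  have hω₁' : ω₁ = (x₁ : ℂ) + Complex.I * (y₁ : ℂ) := hω₁
  have hω₃' : ω₃ = (x₃ : ℂ) + Complex.I * (y₃ : ℂ) := hω₃
  -- sums and products
  have hs1 : ω₁ + starRingEnd ℂ ω₁ = ((2*c₁ + c₂ : ℤ) : ℂ) + (c₂ : ℂ) * (r : ℂ) := by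
    rw [hc1, hω₁', hx1]; push_cast; ring
  have hs3 : ω₃ + starRingEnd ℂ ω₃ = ((2*c₁ + c₂ : ℤ) : ℂ) - (c₂ : ℂ) * (r : ℂ) := by
    rw [hc3, hω₃', hx3]; push_cast; ring
  have hp1 : ω₁ * starRingEnd ℂ ω₁ = ((p : ℤ) : ℂ) := by
    rw [hc1, hω₁']
    have : ((x₁ : ℂ) + Complex.I * y₁) * ((x₁ : ℂ) - Complex.I * y₁)
        = ((x₁ ^ 2 + y₁ ^ 2 : ℝ) : ℂ) := by
      push_cast
      linear_combination (-((y₁:ℝ):ℂ)^2) * Complex.I_sq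
    rw [this, hq1]; push_cast; ring
  have hp3 : ω₃ * starRingEnd ℂ ω₃ = ((p : ℤ) : ℂ) := by
    rw [hc3, hω₃']
    have : ((x₃ : ℂ) + Complex.I * y₃) * ((x₃ : ℂ) - Complex.I * y₃)
        = ((x₃ ^ 2 + y₃ ^ 2 : ℝ) : ℂ) := by
      push_cast
      linear_combination (-((y₃:ℝ):ℂ)^2) * Complex.I_sq
    rw [this, hq3]; push_cast; ring
  have hrC : ((r : ℂ)) ^ 2 = ((D : ℤ) : ℂ) := by
    rw [← Complex.ofReal_pow, hr2]; norm_cast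
  -- expand polynomials
  have e1 : (X - C ω₁) * (X - C (starRingEnd ℂ ω₁))
      = X ^ 2 - C (ω₁ + starRingEnd ℂ ω₁) * X + C (ω₁ * starRingEnd ℂ ω₁) := by
    simp only [C_add, C_mul]; ring
  have e3 : (X - C ω₃) * (X - C (starRingEnd ℂ ω₃))
      = X ^ 2 - C (ω₃ + starRingEnd ℂ ω₃) * X + C (ω₃ * starRingEnd ℂ ω₃) := by
    simp only [C_add, C_mul]; ring
  calc (X - C ω₁) * (X - C (starRingEnd ℂ ω₁)) * (X - C ω₃) * (X - C (starRingEnd ℂ ω₃))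
      = ((X - C ω₁) * (X - C (starRingEnd ℂ ω₁))) * ((X - C ω₃) * (X - C (starRingEnd ℂ ω₃))) := by
        ring
    _ = (X ^ 2 - C (((2*c₁ + c₂ : ℤ) : ℂ) + (c₂ : ℂ) * (r : ℂ)) * X + C ((p : ℤ) : ℂ))
        * (X ^ 2 - C (((2*c₁ + c₂ : ℤ) : ℂ) - (c₂ : ℂ) * (r : ℂ)) * X + C ((p : ℤ) : ℂ)) := by
        rw [e1, e3, hs1, hs3, hp1, hp3]
    _ = X^4 - C ((2*(2*c₁ + c₂) : ℤ) : ℂ) * X^3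
        + C ((2*p + (2*c₁ + c₂)^2 - c₂^2*D : ℤ) : ℂ) * X^2
        - C ((2*p*(2*c₁ + c₂) : ℤ) : ℂ) * X + C ((p^2 : ℤ) : ℂ) := by
        have hCr : (C ((r : ℂ))) ^ 2 = (((D:ℤ) : ℂ[X])) := by
          rw [← map_pow, hrC, map_intCast]
        push_cast
        simp only [map_add, map_sub, map_mul, map_pow, map_ofNat, map_intCast, map_one]
        linear_combination (-1 : ℂ[X]) * (X:ℂ[X])^2 * (((c₂:ℤ):ℂ[X]))^2 * hCr
end
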